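/- arXiv:1703.02174 — 2 statements merged into one kernel-verified Lean document; each statement's English description precedes it below -/
import Mathlib

section
/- In the construction with G = K_{n/2,n/2}, cover (L,H) as specified, any independent set I in H meeting every list L(u) exactly once must assign the same pair (i,j) ∈ ℤ_k × ℤ_k to all vertices of X, and the same pair (i',j') to all vertices of Y; moreover the vertices (x_{i'−i}, i, j) and (y_{j'−j}, i', j') are adjacent in H, so no such I exists. -/
open SimpleGraph

/-- The chromatic number of a graph, as a natural number. -/
noncomputable def chi {V : Type*} (G : SimpleGraph V) : ℕ := sInf {m | G.Colorable m}

/-- The join `J(G, A)` of a graph `G` with a clique on the vertex type `α`: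
every vertex of `α` is adjacent to every vertex of `G` and to every other vertex of `α`. -/
def JoinT {V : Type*} (G : SimpleGraph V) (α : Type*) : SimpleGraph (V ⊕ α) where
  Adj a b :=
    match a, b with
    | Sum.inl u, Sum.inl v => G.Adj u v
    | Sum.inl _, Sum.inr _ => True
    | Sum.inr _, Sum.inl _ => True
    | Sum.inr i, Sum.inr j => i ≠ j
  symm := by
    constructor
    rintro (u | i) (v | j) h
    · exact G.adj_symm h
    · trivial
    · trivial
    · exact Ne.symm h
  loopless := by
    constructor
    rintro (u | i) h
    · exact G.irrefl h
    · exact h rfl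

/-- The join `J(G, s)` of `G` with the complete graph `K_s`. -/
def Join {V : Type*} (G : SimpleGraph V) (s : ℕ) : SimpleGraph (V ⊕ Fin s) := JoinT G (Fin s)

/-- `(L, H)` is a cover of `G`. -/
def IsCover {V W : Type*} (G : SimpleGraph V) (H : SimpleGraph W) (L : V → Finset W) : Prop :=
  (∀ w : W, ∃! v : V, w ∈ L v) ∧
  (∀ u v : V, ∀ x ∈ L u, ∀ y ∈ L v, H.Adj x y → u = v ∨ G.Adj u v) ∧
  (∀ u : V, ∀ x ∈ L u, ∀ y ∈ L u, x ≠ y → H.Adj x y) ∧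
  (∀ u v : V, G.Adj u v →
    ∀ x ∈ L u, ∀ y ∈ L v, ∀ y' ∈ L v, H.Adj x y → H.Adj x y' → y = y')

/-- An `(L, H)`-coloring: an independent set of `H` meeting each list in exactly one vertex. -/
def IsDPColoring {V W : Type*} (H : SimpleGraph W) (L : V → Finset W) (I : Set W) : Prop :=
  (∀ x ∈ I, ∀ y ∈ I, ¬ H.Adj x y) ∧ ∀ v : V, ∃! x, x ∈ I ∧ x ∈ L v

/-- `G` is DP-colorable from every cover all of whose lists have size at least `k`. -/
def DPColorable {V : Type*} (G : SimpleGraph V) (k : ℕ) : Prop :=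
  ∀ (W : Type) (H : SimpleGraph W) (L : V → Finset W),
    IsCover G H L → (∀ v, k ≤ (L v).card) → ∃ I : Set W, IsDPColoring H L I

/-- The DP-chromatic number. -/
noncomputable def dpChi {V : Type*} (G : SimpleGraph V) : ℕ := sInf {k | DPColorable G k}

/-- `G` is `k`-choosable: it has a proper coloring from any list assignment with lists of size `k`. -/
def Choosable {V : Type*} (G : SimpleGraph V) (k : ℕ) : Prop :=
  ∀ L : V → Finset ℕ, (∀ v, k ≤ (L v).card) →
    ∃ f : V → ℕ, (∀ v, f v ∈ L v) ∧ ∀ u v : V, G.Adj u v → f u ≠ f v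

/-- The list chromatic number. -/
noncomputable def listChi {V : Type*} (G : SimpleGraph V) : ℕ := sInf {k | Choosable G k}

/-! The explicit construction of Section 3: `G = K_{n/2,n/2}` with parts
`X = {x} ∪ {x_s : s ∈ ℤ_k}` and `Y = {y} ∪ {y_t : t ∈ ℤ_k}` (so `n/2 = k + 1`), `A` a set of
`k² - 2` further vertices joined completely to everything, lists `L(u) = {u} × ℤ_k × ℤ_k`. -/

/-- The vertex `x` is `Sum.inl (Sum.inl none)`, `x_s` is `Sum.inl (Sum.inl (some s))`,
`y` is `Sum.inl (Sum.inr none)`, `y_t` is `Sum.inl (Sum.inr (some t))`, and the vertices of `A`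
are `Sum.inr a`. -/
abbrev BaseV (k : ℕ) : Type :=
  (Option (ZMod k) ⊕ Option (ZMod k)) ⊕ Fin (k ^ 2 - 2)

/-- `G = K_{n/2, n/2}` with parts `X` and `Y` of size `k + 1 = n/2`. -/
def BipG (k : ℕ) : SimpleGraph (Option (ZMod k) ⊕ Option (ZMod k)) :=
  completeBipartiteGraph (Option (ZMod k)) (Option (ZMod k))

/-- The join `J(G, A)` where `|A| = k² - 2`. -/
def JGA (k : ℕ) : SimpleGraph (BaseV k) := Join (BipG k) (k ^ 2 - 2)

/-- Vertices of the cover graph `H`. -/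
abbrev CoverV (k : ℕ) : Type := BaseV k × (ZMod k × ZMod k)

/-- The list assignment `L(u) = {u} × ℤ_k × ℤ_k`. -/
def LL (k : ℕ) [NeZero k] : BaseV k → Finset (CoverV k) :=
  fun u => Finset.univ.filter (fun w => w.1 = u)

/-- The special "shifted" edges: `(x_s, i, j) ~ (y_t, i + s, j + t)`. -/
def Shifted (k : ℕ) (u v : BaseV k) (p q : ZMod k × ZMod k) : Prop :=
  ∃ s t : ZMod k, u = Sum.inl (Sum.inl (some s)) ∧ v = Sum.inl (Sum.inr (some t)) ∧
    q.1 = p.1 + s ∧ q.2 = p.2 + t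

/-- `u = x_s` and `v = y_t` for some `s, t ∈ ℤ_k`. -/
def IsXsYt (k : ℕ) (u v : BaseV k) : Prop :=
  (∃ s : ZMod k, u = Sum.inl (Sum.inl (some s))) ∧ ∃ t : ZMod k, v = Sum.inl (Sum.inr (some t))

/-- The cover graph `H`: each list is a clique; `(u,i,j) ~ (v,i,j)` whenever `u ~ v` in
`J(G,A)` and `{u,v} ≠ {x_s, y_t}`; and `(x_s, i, j) ~ (y_t, i + s, j + t)`. -/
def HH (k : ℕ) : SimpleGraph (CoverV k) where
  Adj a b :=
    (a.1 = b.1 ∧ a.2 ≠ b.2) ∨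
    (Shifted k a.1 b.1 a.2 b.2 ∨ Shifted k b.1 a.1 b.2 a.2) ∨
    ((JGA k).Adj a.1 b.1 ∧ ¬ IsXsYt k a.1 b.1 ∧ ¬ IsXsYt k b.1 a.1 ∧ a.2 = b.2)
  symm := by
    constructor
    rintro ⟨u, p⟩ ⟨v, q⟩ (⟨h1, h2⟩ | h | ⟨h1, h2, h3, h4⟩)
    · exact Or.inl ⟨h1.symm, h2.symm⟩
    · exact Or.inr (Or.inl h.symm)
    · exact Or.inr (Or.inr ⟨(JGA k).adj_symm h1, h3, h2, h4.symm⟩)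
  loopless := by
    constructor
    rintro ⟨u, p⟩ (⟨-, h2⟩ | (⟨s, t, hs, ht, -⟩ | ⟨s, t, hs, ht, -⟩) | ⟨h1, -⟩)
    · exact h2 rfl
    · rw [hs] at ht; simp at ht
    · rw [hs] at ht; simp at ht
    · exact (JGA k).irrefl h1


/-- In the construction, any independent set `I` of `H` meeting every list exactly once assigns
the same pair `(i, j)` to all vertices of `X` and the same pair `(i', j')` to all vertices of
`Y`; moreover `(x_{i'-i}, i, j)` and `(y_{j'-j}, i', j')` are adjacent in `H`, so no such `I`
exists. -/
theorem construction_analysis (k : ℕ) [NeZero k] :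
    (∀ I : Set (CoverV k), IsDPColoring (HH k) (LL k) I →
      ∃ i j i' j' : ZMod k,
        (∀ (o : Option (ZMod k)) (p : ZMod k × ZMod k),
          ((Sum.inl (Sum.inl o) : BaseV k), p) ∈ I → p = (i, j)) ∧
        (∀ (o : Option (ZMod k)) (p : ZMod k × ZMod k),
          ((Sum.inl (Sum.inr o) : BaseV k), p) ∈ I → p = (i', j')) ∧
        (HH k).Adj ((Sum.inl (Sum.inl (some (i' - i))) : BaseV k), (i, j))
          ((Sum.inl (Sum.inr (some (j' - j))) : BaseV k), (i', j'))) ∧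
    ¬ ∃ I : Set (CoverV k), IsDPColoring (HH k) (LL k) I := by
  classical
  have main : (∀ I : Set (CoverV k), IsDPColoring (HH k) (LL k) I →
      ∃ i j i' j' : ZMod k,
        (∀ (o : Option (ZMod k)) (p : ZMod k × ZMod k),
          ((Sum.inl (Sum.inl o) : BaseV k), p) ∈ I → p = (i, j)) ∧
        (∀ (o : Option (ZMod k)) (p : ZMod k × ZMod k),
          ((Sum.inl (Sum.inr o) : BaseV k), p) ∈ I → p = (i', j')) ∧
        (HH k).Adj ((Sum.inl (Sum.inl (some (i' - i))) : BaseV k), (i, j))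
          ((Sum.inl (Sum.inr (some (j' - j))) : BaseV k), (i', j'))) := by
    intro I hI
    obtain ⟨hind, hmeet⟩ := hI
    have hex : ∀ v : BaseV k, ∃ q : ZMod k × ZMod k,
        ((v, q) ∈ I) ∧ ∀ q', (v, q') ∈ I → q' = q := by
      intro v
      obtain ⟨⟨w1, w2⟩, ⟨hwI, hwL⟩, huniq⟩ := hmeet v
      simp only [LL, Finset.mem_filter, Finset.mem_univ, true_and] at hwL
      subst hwL
      refine ⟨w2, hwI, fun q' hq' => ?_⟩
      have := huniq (w1, q') ⟨hq', by simp [LL]⟩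
      exact (Prod.mk.injEq _ _ _ _ ▸ this).2
    choose p hpI hpU using hex
    -- straight edges force distinct pairs
    have straight : ∀ u v : BaseV k, (JGA k).Adj u v → ¬ IsXsYt k u v → ¬ IsXsYt k v u →
        p u ≠ p v := by
      intro u v hadj h1 h2 heq
      exact hind _ (hpI u) _ (hpI v) (Or.inr (Or.inr ⟨hadj, h1, h2, heq⟩))
    have hA_inj : ∀ a b : Fin (k ^ 2 - 2), a ≠ b → p (Sum.inr a) ≠ p (Sum.inr b) := by
      intro a b hab
      refine straight _ _ hab ?_ ?_ <;> rintro ⟨⟨s, hs⟩, -⟩ <;> exact (by simp at hs)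
    have hXA : ∀ (u : Option (ZMod k) ⊕ Option (ZMod k)) (a : Fin (k ^ 2 - 2)),
        p (Sum.inl u) ≠ p (Sum.inr a) := by
      intro u a
      refine straight _ _ trivial ?_ ?_
      · rintro ⟨-, t, ht⟩; simp at ht
      · rintro ⟨⟨s, hs⟩, -⟩; simp at hs
    have hxy : ∀ o : Option (ZMod k),
        p (Sum.inl (Sum.inl none)) ≠ p (Sum.inl (Sum.inr o)) := by
      intro o
      refine straight _ _ (Or.inl ⟨rfl, rfl⟩) ?_ ?_
      · rintro ⟨⟨s, hs⟩, -⟩; simp at hs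
      · rintro ⟨⟨s, hs⟩, -⟩; simp at hs
    have hXy : ∀ o : Option (ZMod k),
        p (Sum.inl (Sum.inl o)) ≠ p (Sum.inl (Sum.inr none)) := by
      intro o
      refine straight _ _ (Or.inl ⟨rfl, rfl⟩) ?_ ?_
      · rintro ⟨-, t, ht⟩; simp at ht
      · rintro ⟨⟨s, hs⟩, -⟩; simp at hs
    rcases Nat.lt_or_ge k 2 with hk | hk
    · -- k = 1 : everything is trivial
      have hk1 : k = 1 := by have := NeZero.pos k; omega
      subst hk1
      refine ⟨0, 0, 0, 0, ?_, ?_, ?_⟩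
      · intro o q _; exact Subsingleton.elim _ _
      · intro o q _; exact Subsingleton.elim _ _
      · exact Or.inr (Or.inl (Or.inl ⟨0, 0, rfl, rfl,
          Subsingleton.elim _ _, Subsingleton.elim _ _⟩))
    · -- k ≥ 2 : counting argument
      have hkk : 4 ≤ k ^ 2 := by nlinarith
      have count : ∀ z : BaseV k, (∀ a, p z ≠ p (Sum.inr a)) →
          ∀ c : ZMod k × ZMod k, c ≠ p z → (∀ a, c ≠ p (Sum.inr a)) →
          ∀ d : ZMod k × ZMod k, d ≠ p z → (∀ a, d ≠ p (Sum.inr a)) → c = d := by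
        intro z hz c hc1 hc2 d hd1 hd2
        set g : Option (Fin (k ^ 2 - 2)) → ZMod k × ZMod k :=
          fun o => match o with | none => p z | some a => p (Sum.inr a) with hg
        have hginj : Function.Injective g := by
          rintro (_ | a) (_ | b) h
          · rfl
          · exact absurd h (hz b)
          · exact absurd h.symm (hz a)
          · by_contra hab
            exact hA_inj a b (fun h' => hab (by rw [h'])) h
        have himg : (Finset.univ.image g).card = k ^ 2 - 2 + 1 := by
          rw [Finset.card_image_of_injective _ hginj]
          simp
        set S : Finset (ZMod k × ZMod k) := Finset.univ \ Finset.univ.image g with hS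
        have hScard : S.card ≤ 1 := by
          rw [hS, Finset.card_sdiff_of_subset (Finset.subset_univ _), himg]
          have : Fintype.card (ZMod k × ZMod k) = k ^ 2 := by
            rw [Fintype.card_prod, ZMod.card, ← sq]
          rw [Finset.card_univ, this]
          omega
        have hmemS : ∀ e : ZMod k × ZMod k, e ≠ p z → (∀ a, e ≠ p (Sum.inr a)) → e ∈ S := by
          intro e he1 he2
          rw [hS, Finset.mem_sdiff]
          refine ⟨Finset.mem_univ _, fun hmem => ?_⟩
          obtain ⟨o, -, ho⟩ := Finset.mem_image.mp hmem
          cases o with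
          | none => exact he1 ho.symm
          | some a => exact he2 a ho.symm
        exact Finset.card_le_one.mp hScard c (hmemS c hc1 hc2) d (hmemS d hd1 hd2)
      have hYall : ∀ o : Option (ZMod k),
          p (Sum.inl (Sum.inr o)) = p (Sum.inl (Sum.inr none)) := by
        intro o
        exact count (Sum.inl (Sum.inl none)) (hXA _)
          _ (fun h => hxy o h.symm) (hXA _)
          _ (fun h => hxy none h.symm) (hXA _)
      have hXall : ∀ o : Option (ZMod k),
          p (Sum.inl (Sum.inl o)) = p (Sum.inl (Sum.inl none)) := by
        intro o
        exact count (Sum.inl (Sum.inr none)) (hXA _)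
          _ (hXy o) (hXA _)
          _ (hXy none) (hXA _)
      refine ⟨(p (Sum.inl (Sum.inl none))).1, (p (Sum.inl (Sum.inl none))).2,
        (p (Sum.inl (Sum.inr none))).1, (p (Sum.inl (Sum.inr none))).2, ?_, ?_, ?_⟩
      · intro o q hq
        rw [hpU _ _ hq, hXall o]
      · intro o q hq
        rw [hpU _ _ hq, hYall o]
      · exact Or.inr (Or.inl (Or.inl ⟨_, _, rfl, rfl, by ring, by ring⟩))
  refine ⟨main, ?_⟩
  rintro ⟨I, hI⟩
  obtain ⟨i, j, i', j', h1, h2, hadj⟩ := main I hI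
  obtain ⟨hind, hmeet⟩ := hI
  obtain ⟨⟨w1, w2⟩, ⟨hwI, hwL⟩, -⟩ := hmeet (Sum.inl (Sum.inl (some (i' - i))))
  simp only [LL, Finset.mem_filter, Finset.mem_univ, true_and] at hwL
  subst hwL
  obtain ⟨⟨v1, v2⟩, ⟨hvI, hvL⟩, -⟩ := hmeet (Sum.inl (Sum.inr (some (j' - j))))
  simp only [LL, Finset.mem_filter, Finset.mem_univ, true_and] at hvL
  subst hvL
  have hw2 := h1 _ _ hwI
  have hv2 := h2 _ _ hvI
  subst hw2; subst hv2
  exact hind _ hwI _ hvI hadj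
end

section
/- Let G be a graph that maximizes χ_DP(G) − χ(G) among all n-vertex graphs with χ(G) = r, where 2r > n. Then there exists a complete r-partite n-vertex graph H of the form J(G', 2r − n) for some 2(n−r)-vertex graph G', with χ(H) = r and χ_DP(H) − χ(H) ≥ χ_DP(G) − χ(G). -/
open SimpleGraph

/-! ### Auxiliary lemmas -/

/-- Covers of a subgraph are covers of the supergraph; hence DP-colorability
is antitone in the edge set. -/
lemma dp_mono {V : Type*} {G K : SimpleGraph V} (h : G ≤ K) {k : ℕ}
    (hK : DPColorable K k) : DPColorable G k := by
  intro W H L hcov hsize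
  obtain ⟨h1, h2, h3, h4⟩ := hcov
  refine hK W H L ⟨h1, ?_, h3, ?_⟩ hsize
  · intro u v x hx y hy hadj
    rcases h2 u v x hx y hy hadj with heq | hadj'
    · exact Or.inl heq
    · exact Or.inr (h hadj')
  · intro u v huv x hx y hy y' hy' hxy hxy'
    rcases h2 u v x hx y hy hxy with heq | hadj'
    · exact absurd heq (K.ne_of_adj huv)
    · exact h4 u v hadj' x hx y hy y' hy' hxy hxy'

/-- DP-colorability transfers along isomorphisms. -/
lemma dp_transfer {V W' : Type*} (G₁ : SimpleGraph V) (G₂ : SimpleGraph W')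
    (e : V ≃ W') (he : ∀ u v, G₁.Adj u v ↔ G₂.Adj (e u) (e v)) {k : ℕ}
    (h₂ : DPColorable G₂ k) : DPColorable G₁ k := by
  intro W H L hcov hsize
  obtain ⟨h1, h2, h3, h4⟩ := hcov
  have hcov₂ : IsCover G₂ H (fun w => L (e.symm w)) := by
    refine ⟨?_, ?_, ?_, ?_⟩
    · intro w
      obtain ⟨v, hv, huniq⟩ := h1 w
      refine ⟨e v, by simpa using hv, fun y hy => ?_⟩
      have := huniq (e.symm y) hy
      rw [← this]; simp
    · intro u v x hx y hy hadj
      rcases h2 _ _ x hx y hy hadj with heq | hadj'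
      · exact Or.inl (by simpa using congrArg e heq)
      · right
        have := (he (e.symm u) (e.symm v)).1 hadj'
        simpa using this
    · intro u x hx y hy hxy
      exact h3 _ x hx y hy hxy
    · intro u v huv x hx y hy y' hy' hxy hxy'
      have : G₁.Adj (e.symm u) (e.symm v) :=
        (he (e.symm u) (e.symm v)).2 (by simpa using huv)
      exact h4 _ _ this x hx y hy y' hy' hxy hxy'
  obtain ⟨I, hI1, hI2⟩ := h₂ W H _ hcov₂ (fun v => hsize (e.symm v))
  refine ⟨I, hI1, fun v => ?_⟩
  have := hI2 (e v)
  simpa using this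

/-- Colorability transfers along isomorphisms. -/
lemma colorable_transfer {V W' : Type*} (G₁ : SimpleGraph V) (G₂ : SimpleGraph W')
    (e : V ≃ W') (he : ∀ u v, G₁.Adj u v ↔ G₂.Adj (e u) (e v)) {m : ℕ}
    (h : G₂.Colorable m) : G₁.Colorable m := by
  obtain ⟨C⟩ := h
  exact ⟨SimpleGraph.Coloring.mk (fun v => C (e v))
    (fun {u v} hadj => C.valid ((he u v).1 hadj))⟩

/-- Every graph on `Fin n` is DP-colorable from covers with lists of size `≥ n` (greedy). -/
lemma dpcolorable_card {n : ℕ} (G : SimpleGraph (Fin n)) : DPColorable G n := by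
  classical
  intro W H L hcov hsize
  obtain ⟨h1, h2, h3, h4⟩ := hcov
  have hdisj : ∀ {u v : Fin n} {w : W}, w ∈ L u → w ∈ L v → u = v := by
    intro u v w hu hv
    obtain ⟨x, -, hx⟩ := h1 w
    exact (hx u hu).trans (hx v hv).symm
  have key : ∀ k : ℕ, (hk : k ≤ n) → ∃ x : Fin k → W,
      (∀ i : Fin k, x i ∈ L (Fin.castLE hk i)) ∧
      (∀ i j : Fin k, ¬ H.Adj (x i) (x j)) := by
    intro k
    induction k with
    | zero => exact fun _ => ⟨Fin.elim0, fun i => i.elim0, fun i => i.elim0⟩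
    | succ k ih =>
      intro hk
      have hk' : k ≤ n := Nat.le_of_succ_le hk
      obtain ⟨x, hxL, hxI⟩ := ih hk'
      set vk : Fin n := Fin.castLE hk (Fin.last k) with hvk
      set F : Finset W := (L vk).filter (fun w => ∃ j : Fin k, H.Adj (x j) w) with hF
      have hFcard : F.card ≤ k := by
        have hsub : F ⊆ Finset.univ.biUnion
            (fun j : Fin k => (L vk).filter (fun w => H.Adj (x j) w)) := by
          intro w hw
          rw [hF, Finset.mem_filter] at hw
          obtain ⟨j, hj⟩ := hw.2
          exact Finset.mem_biUnion.2 ⟨j, Finset.mem_univ j,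
            Finset.mem_filter.2 ⟨hw.1, hj⟩⟩
        calc F.card ≤ _ := Finset.card_le_card hsub
          _ ≤ ∑ j : Fin k, ((L vk).filter (fun w => H.Adj (x j) w)).card :=
              Finset.card_biUnion_le
          _ ≤ ∑ _j : Fin k, 1 := by
              refine Finset.sum_le_sum fun j _ => ?_
              refine Finset.card_le_one.2 fun a ha b hb => ?_
              rw [Finset.mem_filter] at ha hb
              have hvj : x j ∈ L (Fin.castLE hk' j) := hxL j
              rcases h2 _ _ (x j) hvj a ha.1 ha.2 with heq | hadj
              · exfalso
                have hjk : (Fin.castLE hk' j : Fin n).val = vk.val := congrArg Fin.val heq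
                have : (j : ℕ) < k := j.isLt
                simp [hvk, Fin.castLE] at hjk
                omega
              · exact h4 _ _ hadj (x j) hvj a ha.1 b hb.1 ha.2 hb.2
          _ = k := by simp
      have hFsub : F ⊆ L vk := Finset.filter_subset _ _
      have hne : ((L vk) \ F).Nonempty := by
        apply Finset.card_pos.1
        rw [Finset.card_sdiff_of_subset hFsub]
        have := hsize vk
        omega
      obtain ⟨w, hw⟩ := hne
      rw [Finset.mem_sdiff] at hw
      have hwL : w ∈ L vk := hw.1
      have hwF : ∀ j : Fin k, ¬ H.Adj (x j) w := by
        intro j hj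
        exact hw.2 (by rw [hF, Finset.mem_filter]; exact ⟨hwL, j, hj⟩)
      refine ⟨Fin.snoc x w, ?_, ?_⟩
      · intro i
        refine Fin.lastCases ?_ ?_ i
        · rw [Fin.snoc_last]; exact hwL
        · intro i
          rw [Fin.snoc_castSucc]
          exact hxL i
      · intro i j
        refine Fin.lastCases ?_ ?_ i <;> [skip; intro i'] <;>
          (refine Fin.lastCases ?_ ?_ j <;> [skip; intro j'])
        · rw [Fin.snoc_last]; exact H.irrefl
        · rw [Fin.snoc_last, Fin.snoc_castSucc]
          intro hadj
          exact hwF j' (H.adj_symm hadj)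
        · rw [Fin.snoc_last, Fin.snoc_castSucc]
          exact hwF i'
        · rw [Fin.snoc_castSucc, Fin.snoc_castSucc]
          exact hxI i' j'
  obtain ⟨x, hxL, hxI⟩ := key n le_rfl
  have hxL' : ∀ i : Fin n, x i ∈ L i := by
    intro i
    have := hxL i
    simpa using this
  refine ⟨Set.range x, ?_, ?_⟩
  · rintro a ⟨i, rfl⟩ b ⟨j, rfl⟩
    exact hxI i j
  · intro v
    refine ⟨x v, ⟨⟨v, rfl⟩, hxL' v⟩, ?_⟩
    rintro y ⟨⟨j, rfl⟩, hyL⟩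
    have : j = v := hdisj (hxL' j) hyL
    rw [this]

/-- If `G` maximizes `χ_DP - χ` among `n`-vertex graphs with `χ = r`, where `2r > n`, then there
is a complete `r`-partite `n`-vertex graph of the form `J(G', 2r - n)`, with `G'` a
`2(n-r)`-vertex (complete multipartite) graph, realizing at least the same difference and having
chromatic number `r`. -/
theorem maximizer_is_join {n r : ℕ} (hr : n < 2 * r) (G : SimpleGraph (Fin n))
    (hchi : chi G = r)
    (hmax : ∀ G₂ : SimpleGraph (Fin n), chi G₂ = r → dpChi G₂ - chi G₂ ≤ dpChi G - chi G) :
    ∃ G' : SimpleGraph (Fin (2 * (n - r))), ∃ c : Fin (2 * (n - r)) → Fin (n - r),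
      (∀ u v, G'.Adj u v ↔ c u ≠ c v) ∧
      chi (Join G' (2 * r - n)) = r ∧
      dpChi G - chi G ≤ dpChi (Join G' (2 * r - n)) - chi (Join G' (2 * r - n)) := by
  classical
  have hr1 : 1 ≤ r := by omega
  -- `G` is `n`-colorable, so its chromatic set is nonempty and `r ≤ n`.
  have hGn : G.Colorable n := ⟨SimpleGraph.Coloring.mk id (fun {u v} h => G.ne_of_adj h)⟩
  have hGne : {m | G.Colorable m}.Nonempty := ⟨n, hGn⟩
  have hGr : G.Colorable r := by
    have := Nat.sInf_mem hGne
    rwa [show sInf {m | G.Colorable m} = r from hchi] at this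
  have hrn : r ≤ n := by
    have : chi G ≤ n := Nat.sInf_le hGn
    omega
  obtain ⟨C⟩ := hGr
  set f : Fin n → Fin r := fun v => C v with hf
  -- The complete multipartite supergraph `K` with parts the fibers of `f`.
  set K : SimpleGraph (Fin n) :=
    { Adj := fun u v => f u ≠ f v
      symm := ⟨fun u v h => Ne.symm h⟩
      loopless := ⟨fun v h => h rfl⟩ } with hK
  have hGK : G ≤ K := fun {u v} h => C.valid h
  have hKr : K.Colorable r := ⟨SimpleGraph.Coloring.mk f (fun {u v} h => h)⟩
  have hchiK : chi K = r := by
    have h1 : chi K ≤ r := Nat.sInf_le hKr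
    have h2 : r ≤ chi K := by
      rw [← hchi]
      have hKne : {m | K.Colorable m}.Nonempty :=
        ⟨n, ⟨SimpleGraph.Coloring.mk id (fun {u v} h heq => h (congrArg f heq))⟩⟩
      have hmem : chi K ∈ {m | K.Colorable m} := Nat.sInf_mem hKne
      exact Nat.sInf_le (hmem.mono_left hGK)
    omega
  -- `f` is surjective.
  have hfsurj : Function.Surjective f := by
    by_contra hns
    rw [Function.Surjective] at hns
    push_neg at hns
    obtain ⟨i₀, hi₀⟩ := hns
    have hcol : G.Colorable (r - 1) := by
      have hC : G.Coloring {i : Fin r // ¬ i = i₀} :=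
        SimpleGraph.Coloring.mk (fun v => ⟨f v, fun h => hi₀ v h⟩)
          (fun {u v} h hne => C.valid h (congrArg Subtype.val hne))
      have := hC.colorable
      rwa [Fintype.card_subtype_compl, Fintype.card_subtype_eq, Fintype.card_fin] at this
    have : chi G ≤ r - 1 := Nat.sInf_le hcol
    omega
  -- Fibers of `f`.
  set fib : Fin r → Finset (Fin n) := fun i => Finset.univ.filter (fun v => f v = i) with hfib
  have hfibpos : ∀ i, 1 ≤ (fib i).card := by
    intro i
    obtain ⟨v, hv⟩ := hfsurj i
    exact Finset.card_pos.2 ⟨v, by simp [hfib, hv]⟩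
  have hsum : ∑ i, (fib i).card = n := by
    have := Finset.card_eq_sum_card_fiberwise
      (f := f) (s := Finset.univ) (t := Finset.univ) (fun x _ => Finset.mem_univ _)
    simpa [hfib] using this.symm
  -- Colors with singleton fibers.
  set T : Finset (Fin r) := Finset.univ.filter (fun i => (fib i).card = 1) with hT
  have hTcard : 2 * r - n ≤ T.card := by
    have hsplit : ∑ i, (fib i).card = ∑ i ∈ T, (fib i).card + ∑ i ∈ Tᶜ, (fib i).card :=
      (Finset.sum_add_sum_compl T _).symm
    have hTsum : ∑ i ∈ T, (fib i).card = T.card := by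
      rw [Finset.card_eq_sum_ones]
      refine Finset.sum_congr rfl fun i hi => ?_
      rw [hT, Finset.mem_filter] at hi
      exact hi.2
    have hTc : 2 * Tᶜ.card ≤ ∑ i ∈ Tᶜ, (fib i).card := by
      calc 2 * Tᶜ.card = ∑ _i ∈ Tᶜ, 2 := by rw [Finset.sum_const, smul_eq_mul, mul_comm]
        _ ≤ _ := by
          refine Finset.sum_le_sum fun i hi => ?_
          rw [Finset.mem_compl, hT, Finset.mem_filter] at hi
          have h1 := hfibpos i
          have h2 : ¬ (fib i).card = 1 := fun h => hi ⟨Finset.mem_univ i, h⟩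
          omega
    have hTcc : Tᶜ.card = r - T.card := by
      rw [Finset.card_compl, Fintype.card_fin]
    have hTle : T.card ≤ r := le_trans (Finset.card_le_card (Finset.subset_univ T))
      (le_of_eq (Finset.card_univ.trans (Fintype.card_fin r)))
    omega
  obtain ⟨T', hT'sub, hT'card⟩ := Finset.exists_subset_card_eq (s := T) (n := 2 * r - n) hTcard
  -- Vertices in singleton classes vs the rest.
  set A : Finset (Fin n) := Finset.univ.filter (fun v => f v ∈ T') with hA
  have hAcard : A.card = 2 * r - n := by
    have h1 : A.card = ∑ i ∈ T', (A.filter (fun v => f v = i)).card :=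
      Finset.card_eq_sum_card_fiberwise (fun x hx => by
        simpa [hA] using hx)
    have h2 : ∀ i ∈ T', (A.filter (fun v => f v = i)) = fib i := by
      intro i hi
      ext v
      simp only [hA, hfib, Finset.mem_filter, Finset.mem_univ, true_and]
      constructor
      · rintro ⟨-, h⟩; exact h
      · rintro h; exact ⟨h ▸ hi, h⟩
    rw [h1, Finset.sum_congr rfl (fun i hi => by rw [h2 i hi])]
    have : ∀ i ∈ T', (fib i).card = 1 := by
      intro i hi
      have := hT'sub hi
      rw [hT, Finset.mem_filter] at this
      exact this.2
    rw [Finset.sum_congr rfl this, Finset.sum_const, smul_eq_mul, mul_one, hT'card]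
  have hBcard : Aᶜ.card = 2 * (n - r) := by
    rw [Finset.card_compl, hAcard, Fintype.card_fin]
    omega
  -- Equivalences.
  set eA : A ≃ Fin (2 * r - n) := Finset.equivFinOfCardEq hAcard with heA
  set eB : (Aᶜ : Finset (Fin n)) ≃ Fin (2 * (n - r)) := Finset.equivFinOfCardEq hBcard with heB
  have hTccard : (T'ᶜ : Finset (Fin r)).card = n - r := by
    rw [Finset.card_compl, hT'card, Fintype.card_fin]
    omega
  set dE : (T'ᶜ : Finset (Fin r)) ≃ Fin (n - r) := Finset.equivFinOfCardEq hTccard with hdE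
  have hmemB : ∀ x : Fin (2 * (n - r)), f ((eB.symm x : (Aᶜ : Finset (Fin n))) : Fin n) ∈ T'ᶜ := by
    intro x
    have h2 := (eB.symm x).2
    rw [Finset.mem_compl] at h2
    rw [Finset.mem_compl]
    exact fun h => h2 (Finset.mem_filter.2 ⟨Finset.mem_univ _, h⟩)
  set c : Fin (2 * (n - r)) → Fin (n - r) := fun x => dE ⟨f (eB.symm x : Fin n), hmemB x⟩ with hc
  set G' : SimpleGraph (Fin (2 * (n - r))) :=
    { Adj := fun u v => c u ≠ c v
      symm := ⟨fun u v h => Ne.symm h⟩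
      loopless := ⟨fun v h => h rfl⟩ } with hG'
  -- The equivalence between `Fin n` and the join's vertex type.
  set e : Fin n ≃ (Fin (2 * (n - r)) ⊕ Fin (2 * r - n)) :=
    { toFun := fun v =>
        if h : f v ∈ T' then Sum.inr (eA ⟨v, by rw [hA, Finset.mem_filter]; exact ⟨Finset.mem_univ v, h⟩⟩)
        else Sum.inl (eB ⟨v, by rw [Finset.mem_compl, hA, Finset.mem_filter]; exact fun hh => h hh.2⟩)
      invFun := Sum.elim (fun x => ((eB.symm x : (Aᶜ : Finset (Fin n))) : Fin n))
        (fun y => ((eA.symm y : A) : Fin n))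
      left_inv := by
        intro v
        by_cases h : f v ∈ T' <;> simp [h]
      right_inv := by
        rintro (x | y)
        · have hx := hmemB x
          rw [Finset.mem_compl] at hx
          simp only [Sum.elim_inl]
          refine (dif_neg hx).trans ?_
          congr 1
          have : (⟨((eB.symm x : (Aᶜ : Finset (Fin n))) : Fin n), (eB.symm x).2⟩ :
              (Aᶜ : Finset (Fin n))) = eB.symm x := Subtype.ext rfl
          rw [this, Equiv.apply_symm_apply]
        · have hy : f ((eA.symm y : A) : Fin n) ∈ T' :=
            (Finset.mem_filter.1 (eA.symm y).2).2
          simp only [Sum.elim_inr]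
          refine (dif_pos hy).trans ?_
          congr 1
          have : (⟨((eA.symm y : A) : Fin n), (eA.symm y).2⟩ : A) = eA.symm y := Subtype.ext rfl
          rw [this, Equiv.apply_symm_apply] } with he
  -- singleton fibers: two vertices with the same `T'` color coincide
  have hsingle : ∀ {u v : Fin n}, f u ∈ T' → f u = f v → u = v := by
    intro u v hu hfe
    have hT1 : (fib (f u)).card = 1 := by
      have := hT'sub hu
      rw [hT, Finset.mem_filter] at this
      exact this.2
    obtain ⟨a, ha⟩ := Finset.card_eq_one.1 hT1
    have hu' : u ∈ fib (f u) := by rw [hfib, Finset.mem_filter]; exact ⟨Finset.mem_univ _, rfl⟩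
    have hv' : v ∈ fib (f u) := by rw [hfib, Finset.mem_filter]; exact ⟨Finset.mem_univ _, hfe.symm⟩
    rw [ha, Finset.mem_singleton] at hu' hv'
    exact hu'.trans hv'.symm
  -- adjacency is preserved by `e`
  have hiso : ∀ u v : Fin n, K.Adj u v ↔ (Join G' (2 * r - n)).Adj (e u) (e v) := by
    intro u v
    by_cases hu : f u ∈ T' <;> by_cases hv : f v ∈ T'
    · show (f u ≠ f v) ↔ _
      simp only [he, Equiv.coe_fn_mk, dif_pos hu, dif_pos hv]
      show (f u ≠ f v) ↔ (eA _ ≠ eA _)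
      rw [not_iff_not]
      constructor
      · intro h
        have : u = v := hsingle hu h
        subst this; rfl
      · intro h
        have := eA.injective h
        have huv : u = v := congrArg Subtype.val this
        rw [huv]
    · show (f u ≠ f v) ↔ _
      simp only [he, Equiv.coe_fn_mk, dif_pos hu, dif_neg hv]
      show (f u ≠ f v) ↔ True
      simp only [iff_true]
      exact fun h => hv (h ▸ hu)
    · show (f u ≠ f v) ↔ _
      simp only [he, Equiv.coe_fn_mk, dif_neg hu, dif_pos hv]
      show (f u ≠ f v) ↔ True
      simp only [iff_true]
      exact fun h => hu (h.symm ▸ hv)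
    · have hcB : ∀ (w : Fin n) (hw : w ∈ (Aᶜ : Finset (Fin n)))
          (hw2 : f w ∈ (T'ᶜ : Finset (Fin r))), c (eB ⟨w, hw⟩) = dE ⟨f w, hw2⟩ := by
        intro w hw hw2
        rw [hc]
        beta_reduce
        congr 1
        apply Subtype.ext
        show f ((eB.symm (eB ⟨w, hw⟩) : (Aᶜ : Finset (Fin n))) : Fin n) = f w
        rw [Equiv.symm_apply_apply]
      have hmu : u ∈ (Aᶜ : Finset (Fin n)) :=
        Finset.mem_compl.2 (fun hh => hu (Finset.mem_filter.1 hh).2)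
      have hmv : v ∈ (Aᶜ : Finset (Fin n)) :=
        Finset.mem_compl.2 (fun hh => hv (Finset.mem_filter.1 hh).2)
      have hfu : f u ∈ (T'ᶜ : Finset (Fin r)) := Finset.mem_compl.2 hu
      have hfv : f v ∈ (T'ᶜ : Finset (Fin r)) := Finset.mem_compl.2 hv
      show (f u ≠ f v) ↔ _
      simp only [he, Equiv.coe_fn_mk, dif_neg hu, dif_neg hv]
      show (f u ≠ f v) ↔ (c (eB ⟨u, hmu⟩) ≠ c (eB ⟨v, hmv⟩))
      rw [hcB u hmu hfu, hcB v hmv hfv, not_iff_not]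
      constructor
      · intro h
        congr 1
        exact Subtype.ext h
      · intro h
        exact congrArg Subtype.val (dE.injective h)
  have hiso' : ∀ u v, (Join G' (2 * r - n)).Adj u v ↔ K.Adj (e.symm u) (e.symm v) := by
    intro u v
    rw [hiso (e.symm u) (e.symm v), Equiv.apply_symm_apply, Equiv.apply_symm_apply]
  -- chromatic numbers agree
  have hcolset : {m | (Join G' (2 * r - n)).Colorable m} = {m | K.Colorable m} := by
    ext m
    constructor
    · intro h
      exact colorable_transfer K _ e hiso h
    · intro h
      exact colorable_transfer _ K e.symm (fun u v => (hiso' u v)) h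
  have hchiJ : chi (Join G' (2 * r - n)) = r := by
    rw [chi, hcolset, ← hchiK, chi]
  -- DP chromatic numbers agree
  have hdpset : {k | DPColorable (Join G' (2 * r - n)) k} = {k | DPColorable K k} := by
    ext k
    constructor
    · intro h
      exact dp_transfer K _ e hiso h
    · intro h
      exact dp_transfer _ K e.symm (fun u v => (hiso' u v)) h
  have hdpJ : dpChi (Join G' (2 * r - n)) = dpChi K := by
    rw [dpChi, hdpset, dpChi]
  -- dpChi G ≤ dpChi K
  have hdpGK : dpChi G ≤ dpChi K := by
    have hKmem : dpChi K ∈ {k | DPColorable K k} :=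
      Nat.sInf_mem ⟨n, dpcolorable_card K⟩
    exact Nat.sInf_le (dp_mono hGK hKmem)
  refine ⟨G', c, fun u v => Iff.rfl, hchiJ, ?_⟩
  rw [hchiJ, hchi, hdpJ]
  exact Nat.sub_le_sub_right hdpGK r
end
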